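/- Let χ be a real primitive Dirichlet character modulo q₀ ≥ 3 and λ = 1⋆χ. Let j ≥ 0 be an integer and let u, v be coprime positive integers such that w = uv is squarefree and λ(w) ≠ 0. Then λ_j(w) = λ(w) · ∑_{a+b=j} binom(j,a) · ( ∑_{q ∣ u} Λ*_a(q) ) · ( ∑_{r ∣ v} Λ*_b(r) ). -/

import Mathlib

open Complex

/-- `λ = 1 ⋆ χ`. -/
noncomputable def lamFun {q₀ : ℕ} (χ : DirichletCharacter ℂ q₀) (n : ℕ) : ℂ :=
  ∑ d ∈ n.divisors, χ (d : ZMod q₀)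

/-- The generalized von Mangoldt function `Λ_j = μ ⋆ (log)^j`. -/
noncomputable def LambdaJ (j : ℕ) (n : ℕ) : ℝ :=
  ∑ d ∈ n.divisors, (ArithmeticFunction.moebius d : ℝ) * Real.log ((n / d : ℕ) : ℝ) ^ j

/-- `Λ*_j(q) = (τ(gcd(q,q₀)) / (2^j·τ(q))) · ∑_{mn=q} χ(m) ∑_{a+b=j} C(j,a)·(−1)^b·Λ_a(m)·Λ_b(n)`. -/
noncomputable def LambdaStar {q₀ : ℕ} (χ : DirichletCharacter ℂ q₀) (j : ℕ) (q : ℕ) : ℂ :=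
  (((Nat.gcd q q₀).divisors.card : ℂ) / (2 ^ j * (q.divisors.card : ℂ))) *
    ∑ m ∈ q.divisors, χ (m : ZMod q₀) *
      ∑ p ∈ Finset.HasAntidiagonal.antidiagonal j,
        (j.choose p.1 : ℂ) * (-1) ^ p.2 * (LambdaJ p.1 m : ℂ) * (LambdaJ p.2 (q / m) : ℂ)

/-- `λ_j(u) = ∑_{c ∣ u} χ(c)·(log(c/√u))^j`. -/
noncomputable def lamJ {q₀ : ℕ} (χ : DirichletCharacter ℂ q₀) (j : ℕ) (u : ℕ) : ℂ :=
  ∑ c ∈ u.divisors, χ (c : ZMod q₀) * ((Real.log ((c : ℝ) / Real.sqrt u)) ^ j : ℝ)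



/-!
Take exponential generating functions in `j`. Since `∑ⱼ (log t)ʲ Xʲ / j! = t ^ X`, the families
`λ_j`, `Λ_j` and `Λ*_j` become arithmetic functions with values in `ℂ⟦X⟧` (`lamJX`, `LambdaJX`,
`LambdaStarX`), built from `χ`, `μ` and `n ↦ n ^ (± X / 2)` by Dirichlet convolution and pointwise
products. Hence they are multiplicative, and binomial convolution in `j` becomes multiplication of
series. Both `lamJX χ w` and `λ(w) ∑_{q ∣ w} LambdaStarX χ q` are multiplicative in `w`, so for
squarefree `w` it suffices to compare them at the primes `p ∣ w`. There `λ(p) = 1 + χ(p) ≠ 0`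
forces `χ(p) ∈ {0, 1}`, and both cases are a direct computation.
-/

open PowerSeries Finset ArithmeticFunction
open scoped ArithmeticFunction.Moebius ArithmeticFunction.zeta

noncomputable def egf (F : ℕ → ℂ) : ℂ⟦X⟧ := mk fun j => F j / j.factorial

lemma coeff_egf (F : ℕ → ℂ) (j : ℕ) : coeff j (egf F) = F j / j.factorial := coeff_mk _ _

lemma egf_injective : Function.Injective egf := fun F G h => funext fun j => by
  simpa [coeff_egf, Nat.factorial_ne_zero] using congrArg (coeff j) h

lemma egf_binomialConvolution (F G : ℕ → ℂ) :
    egf (fun j => ∑ p ∈ antidiagonal j, (j.choose p.1 : ℂ) * F p.1 * G p.2) =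
      egf F * egf G := by
  ext j
  rw [coeff_egf, coeff_mul, sum_div]
  refine sum_congr rfl fun p hp => ?_
  obtain rfl := mem_antidiagonal.mp hp
  have hfact := (p.1 + p.2).factorial_ne_zero
  rw [coeff_egf, coeff_egf, Nat.cast_add_choose]
  field_simp

lemma egf_const_mul (c : ℂ) (F : ℕ → ℂ) : egf (fun j => c * F j) = C c * egf F := by
  ext j
  rw [coeff_egf, coeff_C_mul, coeff_egf, mul_div_assoc]

lemma egf_sum {ι : Type*} (s : Finset ι) (F : ι → ℕ → ℂ) :
    egf (fun j => ∑ i ∈ s, F i j) = ∑ i ∈ s, egf (F i) := by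
  ext j
  simp only [coeff_egf, map_sum, sum_div]

lemma egf_pow (t : ℂ) : egf (fun j => t ^ j) = rescale t (exp ℂ) := by
  ext j
  simp [coeff_egf, coeff_exp, div_eq_mul_inv]

lemma mul_apply_of_prime {R : Type*} [Semiring R] (f g : ArithmeticFunction R) {p : ℕ}
    (hp : p.Prime) : (f * g) p = f 1 * g p + f p * g 1 := by
  rw [mul_apply, Nat.sum_divisorsAntidiagonal (fun a b => f a * g b), hp.sum_divisors,
    Nat.div_self hp.pos, Nat.div_one, add_comm]

/-- `powX s n` is the power series `n ^ (s X) = exp (s X log n)`. -/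
noncomputable def powX (s : ℂ) : ArithmeticFunction ℂ⟦X⟧ :=
  toArithmeticFunction fun n => rescale (s * Real.log n) (exp ℂ)

lemma powX_apply (s : ℂ) {n : ℕ} (hn : n ≠ 0) :
    powX s n = rescale (s * Real.log n) (exp ℂ) := by
  simp [powX, toArithmeticFunction, hn]

lemma isMultiplicative_powX (s : ℂ) : (powX s).IsMultiplicative := by
  refine IsMultiplicative.iff_ne_zero.mpr ⟨?_, fun {m n} hm hn _ => ?_⟩
  · simp [powX_apply, rescale_zero]
  · rw [powX_apply _ (mul_ne_zero hm hn), powX_apply _ hm, powX_apply _ hn,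
      exp_mul_exp_eq_exp_add, Nat.cast_mul, Real.log_mul (by positivity) (by positivity),
      ofReal_add, mul_add]

noncomputable def LambdaJX (s : ℂ) : ArithmeticFunction ℂ⟦X⟧ :=
  (μ : ArithmeticFunction ℂ⟦X⟧) * powX s

lemma isMultiplicative_LambdaJX (s : ℂ) : (LambdaJX s).IsMultiplicative :=
  isMultiplicative_moebius.intCast.mul (isMultiplicative_powX s)

lemma LambdaJX_apply_prime (s : ℂ) {p : ℕ} (hp : p.Prime) : LambdaJX s p = powX s p - 1 := by
  simp only [LambdaJX, mul_apply_of_prime _ _ hp, (isMultiplicative_powX _).map_one,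
    isMultiplicative_moebius.intCast.map_one, intCoe_apply, moebius_apply_prime hp]
  push_cast
  ring

lemma egf_LambdaJ (s : ℂ) (n : ℕ) :
    egf (fun j => s ^ j * LambdaJ j n) = LambdaJX s n := by
  have h (j : ℕ) : s ^ j * LambdaJ j n =
      ∑ d ∈ n.divisors, (μ d : ℂ) * (s * Real.log (n / d : ℕ)) ^ j := by
    simp only [LambdaJ, ofReal_sum, mul_sum]
    push_cast
    exact sum_congr rfl fun d _ => by ring
  simp only [h, egf_sum, egf_const_mul, egf_pow, LambdaJX, mul_apply]
  rw [Nat.sum_divisorsAntidiagonal (fun a b => (μ : ArithmeticFunction ℂ⟦X⟧) a * powX s b)]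
  refine sum_congr rfl fun d hd => ?_
  rw [powX_apply _ (Nat.div_pos (Nat.divisor_le hd) (Nat.pos_of_mem_divisors hd)).ne',
    intCoe_apply, map_intCast]

noncomputable def divisorCountRatio (q₀ : ℕ) : ArithmeticFunction ℂ⟦X⟧ :=
  toArithmeticFunction fun q => C (((q.gcd q₀).divisors.card : ℂ) / q.divisors.card)

lemma divisorCountRatio_apply (q₀ : ℕ) {q : ℕ} (hq : q ≠ 0) :
    divisorCountRatio q₀ q = C (((q.gcd q₀).divisors.card : ℂ) / q.divisors.card) := by
  simp [divisorCountRatio, toArithmeticFunction, hq]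

lemma isMultiplicative_divisorCountRatio (q₀ : ℕ) : (divisorCountRatio q₀).IsMultiplicative := by
  refine IsMultiplicative.iff_ne_zero.mpr ⟨by simp [divisorCountRatio_apply],
    fun {m n} hm hn hmn => ?_⟩
  have hgcd : (m * n).gcd q₀ = m.gcd q₀ * n.gcd q₀ := by
    rw [Nat.gcd_comm, Nat.Coprime.gcd_mul q₀ hmn, Nat.gcd_comm q₀, Nat.gcd_comm q₀]
  have hcop : (m.gcd q₀).Coprime (n.gcd q₀) :=
    hmn.coprime_dvd_left (Nat.gcd_dvd_left m q₀) |>.coprime_dvd_right (Nat.gcd_dvd_left n q₀)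
  rw [divisorCountRatio_apply _ (mul_ne_zero hm hn), divisorCountRatio_apply _ hm,
    divisorCountRatio_apply _ hn, hgcd, Nat.Coprime.card_divisors_mul hcop,
    Nat.Coprime.card_divisors_mul hmn, Nat.cast_mul, Nat.cast_mul, mul_div_mul_comm, map_mul]

lemma log_div_sqrt_eq_of_mem_divisors {c u : ℕ} (hd : c ∈ u.divisors) :
    Real.log (c / Real.sqrt u) = 1 / 2 * Real.log c + -1 / 2 * Real.log (u / c : ℕ) := by
  have hc := (Nat.pos_of_mem_divisors hd).ne'
  have hu := Nat.ne_zero_of_mem_divisors hd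
  rw [Nat.cast_div (Nat.dvd_of_mem_divisors hd) (by positivity), Real.log_div (by positivity)
    (by positivity), Real.log_div (by positivity) (by positivity), Real.log_sqrt (by positivity)]
  ring

section Character

variable {q₀ : ℕ} (χ : DirichletCharacter ℂ q₀)

noncomputable def chiX : ArithmeticFunction ℂ⟦X⟧ :=
  toArithmeticFunction fun n : ℕ => χ.ringHomComp C n

lemma chiX_apply {n : ℕ} (hn : n ≠ 0) : chiX χ n = C (χ n) := by
  simp [chiX, toArithmeticFunction, hn]

lemma isMultiplicative_chiX : (chiX χ).IsMultiplicative :=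
  DirichletCharacter.isMultiplicative_toArithmeticFunction (χ.ringHomComp C)

lemma zeta_mul_chiX_apply (n : ℕ) :
    ((ζ : ArithmeticFunction ℂ⟦X⟧) * chiX χ) n = C (lamFun χ n) := by
  rw [coe_zeta_mul_apply, lamFun, map_sum]
  exact sum_congr rfl fun d hd => chiX_apply χ (Nat.pos_of_mem_divisors hd).ne'

lemma lamFun_eq_zetaMul (n : ℕ) : lamFun χ n = χ.zetaMul n := by
  rw [lamFun, DirichletCharacter.zetaMul, coe_zeta_mul_apply]
  exact sum_congr rfl fun d hd => χ.apply_eq_toArithmeticFunction_apply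
    (Nat.pos_of_mem_divisors hd).ne'

lemma lamFun_prime {p : ℕ} (hp : p.Prime) : lamFun χ p = χ p + 1 := by
  simp [lamFun, hp.sum_divisors]

noncomputable def lamJX : ArithmeticFunction ℂ⟦X⟧ :=
  (chiX χ).pmul (powX (1 / 2)) * powX (-1 / 2)

lemma isMultiplicative_lamJX : (lamJX χ).IsMultiplicative :=
  ((isMultiplicative_chiX χ).pmul (isMultiplicative_powX _)).mul (isMultiplicative_powX _)

lemma egf_lamJ (u : ℕ) : egf (fun j => lamJ χ j u) = lamJX χ u := by
  simp only [lamJ, ofReal_pow, egf_sum, egf_const_mul, egf_pow, lamJX, mul_apply]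
  rw [Nat.sum_divisorsAntidiagonal (fun a b => (chiX χ).pmul (powX (1 / 2)) a * powX (-1 / 2) b)]
  refine sum_congr rfl fun c hc => ?_
  have hc0 := (Nat.pos_of_mem_divisors hc).ne'
  rw [pmul_apply, chiX_apply χ hc0, powX_apply _ hc0,
    powX_apply _ (Nat.div_pos (Nat.divisor_le hc) (Nat.pos_of_mem_divisors hc)).ne', mul_assoc,
    exp_mul_exp_eq_exp_add, log_div_sqrt_eq_of_mem_divisors hc]
  push_cast
  rfl

lemma lamJX_apply_prime {p : ℕ} (hp : p.Prime) :
    lamJX χ p = powX (-1 / 2) p + C (χ p) * powX (1 / 2) p := by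
  simp only [lamJX, mul_apply_of_prime _ _ hp, pmul_apply, (isMultiplicative_chiX χ).map_one,
    (isMultiplicative_powX _).map_one, chiX_apply χ hp.ne_zero]
  ring

noncomputable def LambdaStarX : ArithmeticFunction ℂ⟦X⟧ :=
  (divisorCountRatio q₀).pmul ((chiX χ).pmul (LambdaJX (1 / 2)) * LambdaJX (-1 / 2))

lemma isMultiplicative_LambdaStarX : (LambdaStarX χ).IsMultiplicative :=
  (isMultiplicative_divisorCountRatio q₀).pmul
    (((isMultiplicative_chiX χ).pmul (isMultiplicative_LambdaJX _)).mul
      (isMultiplicative_LambdaJX _))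

lemma LambdaStar_eq_sum_choose_mul (j q : ℕ) : LambdaStar χ j q =
    ((q.gcd q₀).divisors.card : ℂ) / q.divisors.card * ∑ m ∈ q.divisors, χ m *
      ∑ p ∈ antidiagonal j, (j.choose p.1 : ℂ) * ((1 / 2) ^ p.1 * LambdaJ p.1 m) *
        ((-1 / 2) ^ p.2 * LambdaJ p.2 (q / m)) := by
  rw [LambdaStar, div_mul_eq_div_div_swap, div_mul_eq_mul_div, mul_div_assoc]
  congr 1
  simp only [sum_div, mul_div_assoc]
  refine sum_congr rfl fun m _ => congrArg _ (sum_congr rfl fun p hp => ?_)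
  rw [← mem_antidiagonal.mp hp, div_pow, div_pow, one_pow, pow_add]
  ring

lemma egf_LambdaStar (q : ℕ) : egf (fun j => LambdaStar χ j q) = LambdaStarX χ q := by
  rcases eq_or_ne q 0 with rfl | hq
  · ext j
    simp [LambdaStar, coeff_egf]
  simp only [LambdaStar_eq_sum_choose_mul, egf_const_mul, egf_sum, LambdaStarX, pmul_apply,
    divisorCountRatio_apply q₀ hq]
  rw [mul_apply, Nat.sum_divisorsAntidiagonal (fun a b =>
    (chiX χ).pmul (LambdaJX (1 / 2)) a * LambdaJX (-1 / 2) b)]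
  refine congrArg _ (sum_congr rfl fun m hm => ?_)
  rw [egf_binomialConvolution (fun a => (1 / 2) ^ a * (LambdaJ a m : ℂ))
    (fun b => (-1 / 2) ^ b * (LambdaJ b (q / m) : ℂ)), egf_LambdaJ, egf_LambdaJ, pmul_apply,
    chiX_apply χ (Nat.pos_of_mem_divisors hm).ne', mul_assoc]

lemma egf_sum_divisors_LambdaStar (n : ℕ) :
    egf (fun j => ∑ q ∈ n.divisors, LambdaStar χ j q) =
      ((ζ : ArithmeticFunction ℂ⟦X⟧) * LambdaStarX χ) n := by
  rw [egf_sum, coe_zeta_mul_apply]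
  exact sum_congr rfl fun q _ => egf_LambdaStar χ q

lemma LambdaStarX_apply_prime {p : ℕ} (hp : p.Prime) :
    LambdaStarX χ p = divisorCountRatio q₀ p *
      (powX (-1 / 2) p - 1 + C (χ p) * (powX (1 / 2) p - 1)) := by
  simp only [LambdaStarX, mul_apply_of_prime _ _ hp, pmul_apply, (isMultiplicative_chiX χ).map_one,
    (isMultiplicative_LambdaJX _).map_one, LambdaJX_apply_prime _ hp, chiX_apply χ hp.ne_zero]
  ring

lemma lamJX_eq_of_prime (hval : ∀ n : ZMod q₀, χ n = -1 ∨ χ n = 0 ∨ χ n = 1) {p : ℕ}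
    (hp : p.Prime) (hlam : lamFun χ p ≠ 0) :
    lamJX χ p = C (lamFun χ p) * ((ζ : ArithmeticFunction ℂ⟦X⟧) * LambdaStarX χ) p := by
  rw [lamJX_apply_prime χ hp, coe_zeta_mul_apply, hp.sum_divisors, LambdaStarX_apply_prime χ hp,
    (isMultiplicative_LambdaStarX χ).map_one, lamFun_prime χ hp,
    divisorCountRatio_apply q₀ hp.ne_zero]
  rw [lamFun_prime χ hp] at hlam
  have hcard : (p.divisors.card : ℂ) = 2 := by
    rw [hp.divisors, card_pair hp.one_lt.ne]
    rfl
  rcases hval p with h | h | h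
  · exact absurd (by rw [h]; ring) hlam
  · have hdvd : p ∣ q₀ := by
      by_contra hnd
      exact ((ZMod.isUnit_prime_of_not_dvd hp hnd).map χ).ne_zero h
    rw [h, Nat.gcd_eq_left hdvd, hcard]
    simp
  · have hnd : ¬ p ∣ q₀ := fun hdvd =>
      one_ne_zero (h.symm.trans (χ.map_nonunit ((ZMod.isUnit_prime_iff_not_dvd hp).not.mpr
        (not_not.mpr hdvd))))
    have hhalf : (2 : ℂ⟦X⟧) * C (1 / 2) = 1 := by
      rw [← map_ofNat C 2, ← map_mul]
      norm_num
    rw [h, Nat.Coprime.gcd_eq_one ((Nat.Prime.coprime_iff_not_dvd hp).mpr hnd), hcard]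
    simp only [Nat.divisors_one, card_singleton, Nat.cast_one, map_one, one_add_one_eq_two,
      map_ofNat]
    linear_combination (2 - powX (-1 / 2) p - powX (1 / 2) p) * hhalf

lemma lamJX_eq_of_squarefree (hval : ∀ n : ZMod q₀, χ n = -1 ∨ χ n = 0 ∨ χ n = 1) {u : ℕ}
    (hu : Squarefree u) (hlam : lamFun χ u ≠ 0) :
    lamJX χ u = C (lamFun χ u) * ((ζ : ArithmeticFunction ℂ⟦X⟧) * LambdaStarX χ) u := by
  have hG : ((ζ * chiX χ).pmul (ζ * LambdaStarX χ)).IsMultiplicative :=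
    (isMultiplicative_zeta.natCast.mul (isMultiplicative_chiX χ)).pmul
      (isMultiplicative_zeta.natCast.mul (isMultiplicative_LambdaStarX χ))
  rw [← zeta_mul_chiX_apply, ← pmul_apply, ← (isMultiplicative_lamJX χ).prod_primeFactors hu,
    ← hG.prod_primeFactors hu]
  refine prod_congr rfl fun p hp => ?_
  have hlamp : lamFun χ p ≠ 0 := fun h => hlam <| by
    rw [lamFun_eq_zetaMul, ← χ.isMultiplicative_zetaMul.prod_primeFactors hu]
    exact prod_eq_zero hp (by rwa [← lamFun_eq_zetaMul])
  rw [pmul_apply, zeta_mul_chiX_apply,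
    lamJX_eq_of_prime χ hval (Nat.prime_of_mem_primeFactors hp) hlamp]

end Character

theorem statement18 :
    ∀ (q₀ : ℕ) (χ : DirichletCharacter ℂ q₀),
      3 ≤ q₀ → χ.IsPrimitive →
      (∀ n : ZMod q₀, χ n = -1 ∨ χ n = 0 ∨ χ n = 1) →
      ∀ j : ℕ, ∀ u v : ℕ, 0 < u → 0 < v → Nat.Coprime u v →
        Squarefree (u * v) → lamFun χ (u * v) ≠ 0 →
        lamJ χ j (u * v) =
          lamFun χ (u * v) *
            ∑ p ∈ Finset.HasAntidiagonal.antidiagonal j,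
              (j.choose p.1 : ℂ) *
                (∑ q ∈ u.divisors, LambdaStar χ p.1 q) *
                (∑ r ∈ v.divisors, LambdaStar χ p.2 r) := by
  intro q₀ χ _ _ hval j u v _ _ hcop hsq hlam
  revert j
  rw [← funext_iff, ← egf_injective.eq_iff, egf_lamJ, lamJX_eq_of_squarefree χ hval hsq hlam,
    egf_const_mul, egf_binomialConvolution (fun a => ∑ q ∈ u.divisors, LambdaStar χ a q)
      (fun b => ∑ r ∈ v.divisors, LambdaStar χ b r),
    egf_sum_divisors_LambdaStar, egf_sum_divisors_LambdaStar,
    (isMultiplicative_zeta.natCast.mul (isMultiplicative_LambdaStarX χ)).map_mul_of_coprime hcop]
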